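/- For a finite group G in which every element g has order γ_g, and a subset Ω of G closed under invertible powering and under conjugation, the quantity β(F,Ω) := Σ_{id ≠ h ∈ Ω} c(h)/[ℚ(ζ_{γ_h}) : ℚ] is a non-negative integer, where c(h) is the number of conjugates of h and [ℚ(ζ_n) : ℚ] = φ(n). -/

import Mathlib

/-!
Group the terms by the cyclic subgroup `⟨h⟩` they generate. Two generators of the same cyclic
subgroup are powers of each other, so they have the same order and, since `x ↦ x ^ a` maps the
conjugacy class of `g` bijectively onto that of `g ^ a`, equally many conjugates. By closure under
invertible powering, the fiber of `⟨g⟩` consists of all `φ(γ_g)` generators of `⟨g⟩`, so it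
contributes exactly `c(g)` to the sum.
-/

open Subgroup

section

variable {G : Type*} [Group G]

theorem orderOf_eq_of_zpowers_eq {g h : G} (hgh : zpowers g = zpowers h) :
    orderOf g = orderOf h := by
  rw [← Nat.card_zpowers, ← Nat.card_zpowers, hgh]

theorem zpowers_eq_zpowers_iff_mem_and_orderOf_eq [Finite G] {g h : G} :
    zpowers h = zpowers g ↔ h ∈ zpowers g ∧ orderOf h = orderOf g := by
  refine ⟨fun hgh => ⟨hgh ▸ mem_zpowers h, orderOf_eq_of_zpowers_eq hgh⟩, ?_⟩
  rintro ⟨hmem, hord⟩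
  exact eq_of_le_of_card_ge (zpowers_le.2 hmem) (by rw [Nat.card_zpowers, Nat.card_zpowers, hord])

theorem Nat.card_zpowers_eq_zpowers_eq_totient [Finite G] (g : G) :
    Nat.card {h : G // zpowers h = zpowers g} = (orderOf g).totient := by
  classical
  have : Fintype G := Fintype.ofFinite G
  calc Nat.card {h : G // zpowers h = zpowers g}
      = Nat.card {a : zpowers g // orderOf a = orderOf g} :=
        Nat.card_congr <|
          (Equiv.subtypeEquivRight fun _ => zpowers_eq_zpowers_iff_mem_and_orderOf_eq).trans
            (Equiv.subtypeSubtypeEquivSubtypeInter (· ∈ zpowers g) (orderOf · = orderOf g)).symm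
          |>.trans (Equiv.subtypeEquivRight fun a => by rw [Subgroup.orderOf_coe])
    _ = (orderOf g).totient := by
      rw [Nat.card_eq_fintype_card, Fintype.card_subtype]
      exact IsCyclic.card_orderOf_eq_totient (α := zpowers g) (dvd_of_eq Fintype.card_zpowers.symm)

theorem IsConj.zpow {a b : G} (n : ℤ) (h : IsConj a b) : IsConj (a ^ n) (b ^ n) := by
  obtain ⟨c, rfl⟩ := isConj_iff.1 h
  exact isConj_iff.2 ⟨c, conj_zpow.symm⟩

theorem IsConj.zpow_eq_self {g x : G} {n : ℤ} (hx : IsConj g x) (hg : g ^ n = g) :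
    x ^ n = x := by
  obtain ⟨c, rfl⟩ := isConj_iff.1 hx
  rw [conj_zpow, hg]

theorem Nat.card_isConj_eq_of_zpowers_eq {g h : G} (hgh : zpowers g = zpowers h) :
    Nat.card {x : G // IsConj g x} = Nat.card {x : G // IsConj h x} := by
  obtain ⟨a, ha⟩ := mem_zpowers_iff.1 (hgh ▸ mem_zpowers h)
  obtain ⟨b, hb⟩ := mem_zpowers_iff.1 (hgh ▸ mem_zpowers g)
  have hab : g ^ (a * b) = g := by rw [zpow_mul, ha, hb]
  have hba : h ^ (b * a) = h := by rw [zpow_mul, hb, ha]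
  exact Nat.card_congr
    { toFun x := ⟨x.1 ^ a, ha ▸ x.2.zpow a⟩
      invFun y := ⟨y.1 ^ b, hb ▸ y.2.zpow b⟩
      left_inv x := Subtype.ext <| by simpa only [← zpow_mul] using x.2.zpow_eq_self hab
      right_inv y := Subtype.ext <| by simpa only [← zpow_mul] using y.2.zpow_eq_self hba }

end

theorem Finset.exists_sum_eq_natCast_of_fiberwise {ι κ R : Type*} [DecidableEq κ]
    [AddCommMonoidWithOne R] (s : Finset ι) (k : ι → κ) (f : ι → R)
    (hf : ∀ i ∈ s, ∃ n : ℕ, ∑ j ∈ s with k j = k i, f j = n) :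
    ∃ n : ℕ, ∑ i ∈ s, f i = n := by
  rw [← Finset.sum_fiberwise_of_maps_to (fun i hi => Finset.mem_image_of_mem k hi)]
  refine Finset.sum_induction _ (fun r : R => ∃ n : ℕ, r = n)
    (fun _ _ ⟨m, hm⟩ ⟨n, hn⟩ => ⟨m + n, by rw [hm, hn, Nat.cast_add]⟩) ⟨0, Nat.cast_zero.symm⟩ ?_
  intro c hc
  obtain ⟨i, hi, rfl⟩ := Finset.mem_image.1 hc
  exact hf i hi

open Finset in
theorem stmt13_general {G : Type*} [Group G] [Fintype G] [DecidableEq G] (Ω : Finset G)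
    (hpow : ∀ g h : G, (∃ a : ℤ, g ^ a = h) → (∃ b : ℤ, h ^ b = g) → (g ∈ Ω ↔ h ∈ Ω)) :
    ∃ k : ℕ,
      ∑ h ∈ Ω.erase 1,
        (Nat.card {x : G // IsConj h x} : ℚ) / (Nat.totient (orderOf h) : ℚ) = (k : ℚ) := by
  classical
  refine exists_sum_eq_natCast_of_fiberwise _ zpowers _ fun g hg =>
    ⟨Nat.card {x : G // IsConj g x}, ?_⟩
  have hfiber : ∀ h, zpowers h = zpowers g → h ∈ Ω.erase 1 := by
    intro h hgh
    obtain ⟨hg1, hgΩ⟩ := mem_erase.1 hg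
    obtain ⟨a, ha⟩ := mem_zpowers_iff.1 (hgh ▸ mem_zpowers h)
    obtain ⟨b, hb⟩ := mem_zpowers_iff.1 (hgh ▸ mem_zpowers g)
    refine mem_erase.2 ⟨?_, (hpow g h ⟨a, ha⟩ ⟨b, hb⟩).1 hgΩ⟩
    rintro rfl
    exact hg1 (zpowers_eq_bot.1 (by rw [← hgh, zpowers_one_eq_bot]))
  have hcard : #{h ∈ Ω.erase 1 | zpowers h = zpowers g} = (orderOf g).totient := by
    rw [← Nat.card_zpowers_eq_zpowers_eq_totient, Nat.card_eq_fintype_card, Fintype.card_subtype]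
    congr 1
    ext h
    simp only [mem_filter, mem_univ, true_and]
    exact ⟨And.right, fun hgh => ⟨hfiber h hgh, hgh⟩⟩
  have htotient : ((orderOf g).totient : ℚ) ≠ 0 := by
    exact_mod_cast (Nat.totient_pos.2 (orderOf_pos g)).ne'
  rw [sum_congr rfl fun h hh => by
    rw [Nat.card_isConj_eq_of_zpowers_eq (mem_filter.1 hh).2,
      orderOf_eq_of_zpowers_eq (mem_filter.1 hh).2], sum_const, hcard, nsmul_eq_mul]
  field_simp

/-- For a finite group `G` and a subset `Ω ⊆ G` closed under invertible powering and under
conjugation, the quantity `β(F,Ω) = Σ_{id ≠ h ∈ Ω} c(h)/φ(γ_h)` is a non-negative integer,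
where `c(h)` is the number of conjugates of `h`, `γ_h` the order of `h`, and
`[ℚ(ζ_n):ℚ] = φ(n)`. -/
theorem stmt13 {G : Type*} [Group G] [Fintype G] [DecidableEq G] (Ω : Finset G)
    (hpow : ∀ g h : G, (∃ a : ℤ, g ^ a = h) → (∃ b : ℤ, h ^ b = g) → (g ∈ Ω ↔ h ∈ Ω))
    (hconj : ∀ g ∈ Ω, ∀ x : G, x * g * x⁻¹ ∈ Ω) :
    ∃ k : ℕ,
      ∑ h ∈ Ω.erase 1,
        (Nat.card {x : G // IsConj h x} : ℚ) / (Nat.totient (orderOf h) : ℚ) = (k : ℚ) :=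
  stmt13_general Ω hpow
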